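/- For every positive integer k, ∫₀^{π/8} sin^{2k}θ dθ ≥ (1/(2k+1)) · (√2/4) · ((2−√2)/4)^k · (1 + ((2−√2)/4)·(2k+2)/(2k+3) + ((2−√2)/4)²·((2k+2)(2k+4))/((2k+3)(2k+5))). -/

import Mathlib

/-!
Writing `I m = ∫₀^b sin^m`, integration by parts gives
`(m + 1) I m = sin b ^ (m + 1) cos b + (m + 2) I (m + 2)`. Iterating this three times from `m = 2k`
and dropping the last remainder `I (2k + 6) ≥ 0` leaves a sum of three boundary terms, which at
`b = π/8` are evaluated with `sin² (π/8) = (2 - √2)/4` and `sin (π/8) cos (π/8) = √2/4`.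
-/

open Real intervalIntegral Finset

theorem mul_integral_sin_pow_eq (b : ℝ) (m : ℕ) :
    (m + 1) * ∫ x in (0 : ℝ)..b, sin x ^ m =
      sin b ^ (m + 1) * cos b + (m + 2) * ∫ x in (0 : ℝ)..b, sin x ^ (m + 2) := by
  have := integral_sin_pow_aux (a := 0) (b := b) (n := m)
  simp only [sin_zero, zero_pow m.succ_ne_zero, zero_mul, zero_sub] at this
  linarith

theorem integral_sin_pow_nonneg {m : ℕ} (hm : Even m) {b : ℝ} (hb : 0 ≤ b) :
    0 ≤ ∫ x in (0 : ℝ)..b, sin x ^ m :=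
  integral_nonneg hb fun x _ => hm.pow_nonneg (sin x)

/-- The `j`-th boundary term `sin b ^ (m + 1 + 2j) * cos b`, with its coefficient, produced by
applying `mul_integral_sin_pow_eq` `j + 1` times starting from `sin ^ m`. -/
noncomputable def sinPowBoundaryTerm (m : ℕ) (b : ℝ) (j : ℕ) : ℝ :=
  (∏ i ∈ range j, ((m : ℝ) + 2 + 2 * i)) / (∏ i ∈ range (j + 1), ((m : ℝ) + 1 + 2 * i)) *
    (sin b ^ (m + 1 + 2 * j) * cos b)

theorem sinPowBoundaryTerm_zero (m : ℕ) (b : ℝ) :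
    sinPowBoundaryTerm m b 0 = sin b ^ (m + 1) * cos b / (m + 1) := by
  simp only [sinPowBoundaryTerm, range_zero, prod_empty, zero_add, range_one, prod_singleton,
    Nat.cast_zero, mul_zero, add_zero]
  ring

theorem sinPowBoundaryTerm_succ (m : ℕ) (b : ℝ) (j : ℕ) :
    sinPowBoundaryTerm m b (j + 1) = (m + 2) / (m + 1) * sinPowBoundaryTerm (m + 2) b j := by
  simp only [sinPowBoundaryTerm, prod_range_succ' _ j, prod_range_succ' _ (j + 1)]
  push_cast
  rw [show m + 1 + 2 * (j + 1) = m + 2 + 1 + 2 * j by ring]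
  field_simp
  ring_nf

theorem sum_sinPowBoundaryTerm_le_integral {m : ℕ} (hm : Even m) {b : ℝ} (hb : 0 ≤ b) (N : ℕ) :
    ∑ j ∈ range N, sinPowBoundaryTerm m b j ≤ ∫ x in (0 : ℝ)..b, sin x ^ m := by
  induction N generalizing m with
  | zero => simpa using integral_sin_pow_nonneg hm hb
  | succ N ih =>
    have hm1 : (0 : ℝ) < m + 1 := by positivity
    rw [sum_range_succ', ← mul_le_mul_iff_of_pos_left hm1, mul_integral_sin_pow_eq]
    simp only [sinPowBoundaryTerm_succ, ← mul_sum, sinPowBoundaryTerm_zero]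
    calc (m + 1 : ℝ) * ((m + 2) / (m + 1) * ∑ j ∈ range N, sinPowBoundaryTerm (m + 2) b j +
            sin b ^ (m + 1) * cos b / (m + 1))
        = sin b ^ (m + 1) * cos b + (m + 2) * ∑ j ∈ range N, sinPowBoundaryTerm (m + 2) b j := by
          field_simp; ring
      _ ≤ _ := by gcongr; exact_mod_cast ih (hm.add even_two)

theorem sin_sq_pi_div_eight : sin (π / 8) ^ 2 = (2 - √2) / 4 := by
  rw [sin_sq_eq_half_sub, show 2 * (π / 8) = π / 4 by ring, cos_pi_div_four]
  ring

theorem sin_mul_cos_pi_div_eight : sin (π / 8) * cos (π / 8) = √2 / 4 := by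
  have := sin_two_mul (π / 8)
  rw [show 2 * (π / 8) = π / 4 by ring, sin_pi_div_four] at this
  linarith

theorem sin_integral_lower_bound_refined_general (k : ℕ) :
    (1 / (2 * (k : ℝ) + 1)) * (Real.sqrt 2 / 4) * ((2 - Real.sqrt 2) / 4) ^ k *
        (1 + ((2 - Real.sqrt 2) / 4) * ((2 * (k : ℝ) + 2) / (2 * (k : ℝ) + 3)) +
          ((2 - Real.sqrt 2) / 4) ^ 2 *
            ((2 * (k : ℝ) + 2) * (2 * (k : ℝ) + 4) /
              ((2 * (k : ℝ) + 3) * (2 * (k : ℝ) + 5)))) ≤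
      ∫ θ in (0:ℝ)..(Real.pi / 8), Real.sin θ ^ (2 * k) := by
  refine le_of_eq_of_le ?_ (sum_sinPowBoundaryTerm_le_integral (even_two_mul k) (by positivity) 3)
  have hterm : ∀ j, sin (π / 8) ^ (2 * k + 1 + 2 * j) * cos (π / 8) =
      √2 / 4 * ((2 - √2) / 4) ^ k * ((2 - √2) / 4) ^ j := fun j => by
    rw [← sin_sq_pi_div_eight, ← sin_mul_cos_pi_div_eight]; ring
  simp only [sinPowBoundaryTerm, sum_range_succ, prod_range_succ, range_zero, sum_empty,
    prod_empty, hterm]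
  push_cast
  field_simp
  ring

/-- For every positive integer `k`,
`∫₀^{π/8} sin^{2k}θ dθ ≥ (1/(2k+1))·(√2/4)·((2−√2)/4)^k ·
(1 + ((2−√2)/4)·(2k+2)/(2k+3) + ((2−√2)/4)²·((2k+2)(2k+4))/((2k+3)(2k+5)))`. -/
theorem sin_integral_lower_bound_refined (k : ℕ) (hk : 1 ≤ k) :
    (1 / (2 * (k : ℝ) + 1)) * (Real.sqrt 2 / 4) * ((2 - Real.sqrt 2) / 4) ^ k *
        (1 + ((2 - Real.sqrt 2) / 4) * ((2 * (k : ℝ) + 2) / (2 * (k : ℝ) + 3)) +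
          ((2 - Real.sqrt 2) / 4) ^ 2 *
            ((2 * (k : ℝ) + 2) * (2 * (k : ℝ) + 4) /
              ((2 * (k : ℝ) + 3) * (2 * (k : ℝ) + 5)))) ≤
      ∫ θ in (0:ℝ)..(Real.pi / 8), Real.sin θ ^ (2 * k) :=
  sin_integral_lower_bound_refined_general k
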